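/- Let n ≥ 1, let p : {1,…,n} → [0,1] be a probability profile, let σ be a sorting permutation for p, let D ∈ ℝ, and let 1 ≤ k ≤ n satisfy ∑_{i=1}^{k−1} p_{σ(i)} = D − 1/2. Then f_{p,D}({σ(1),…,σ(k−1)}) = f_{p,D}({σ(1),…,σ(k)}), and both subsets {σ(1),…,σ(k−1)} and {σ(1),…,σ(k)} are optimal. -/

import Mathlib

/-!
Let `A = {σ(1),…,σ(k-1)}` and `a = ∑_A p`, so that `D = a + 1/2`. Adding `σ(k)` to `A` changes the
loss by `p_{σ(k)} (2(a - D) + 1) = 0`. For an arbitrary `S`, completing the square gives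
`f(S) - f(A) = (s - a)² - (q_S - q_A)`, where `s, q` are the sums of `p_i` and `p_i²`. With
`X = S \ A` and `Y = A \ S` the threshold `c = p_{σ(k)}` separates `X` (below) from `Y` (above),
and `∑_X x² - ∑_Y y² ≤ (∑_X x - ∑_Y y)²` for such a configuration: either every `x` is at most
`d = ∑_X x - ∑_Y y`, and comparing with `min c d` does it, or some `x > d` can be cancelled against
any `y` without loss.
-/

open Finset

/-- Expected loss `f_{p,D}(S) = (∑_{i∈S} p_i − D)² + ∑_{i∈S} p_i(1 − p_i)`. -/
noncomputable def expLoss {n : ℕ} (p : Fin n → ℝ) (D : ℝ) (S : Finset (Fin n)) : ℝ :=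
  (∑ i ∈ S, p i - D) ^ 2 + ∑ i ∈ S, p i * (1 - p i)

/-- The set `{σ(1),…,σ(k)}` (1-based), i.e. the image under `σ` of the first `k` indices. -/
def prefixSet {n : ℕ} (σ : Equiv.Perm (Fin n)) (k : ℕ) : Finset (Fin n) :=
  (Finset.univ.filter fun i : Fin n => (i : ℕ) < k).image σ

section Exchange

variable {ι : Type*} (p : ι → ℝ)

theorem sum_sq_sub_sum_sq_le_mul_sub_sum {X Y : Finset ι} {e : ℝ}
    (hX : ∀ i ∈ X, 0 ≤ p i ∧ p i ≤ e) (hY : ∀ j ∈ Y, e ≤ p j) (he : 0 ≤ e) :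
    ∑ i ∈ X, p i ^ 2 - ∑ j ∈ Y, p j ^ 2 ≤ e * (∑ i ∈ X, p i - ∑ j ∈ Y, p j) := by
  have hXsq : ∑ i ∈ X, p i ^ 2 ≤ ∑ i ∈ X, e * p i :=
    sum_le_sum fun i hi => by nlinarith [hX i hi]
  have hYsq : ∑ j ∈ Y, e * p j ≤ ∑ j ∈ Y, p j ^ 2 :=
    sum_le_sum fun j hj => by nlinarith [hY j hj]
  rw [← mul_sum] at hXsq hYsq
  linarith

theorem sum_sq_sub_sum_sq_le_sq_sub_sum [DecidableEq ι] (X Y : Finset ι) {c : ℝ} (hc : 0 ≤ c)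
    (hX : ∀ i ∈ X, 0 ≤ p i ∧ p i ≤ c) (hY : ∀ j ∈ Y, c ≤ p j) :
    ∑ i ∈ X, p i ^ 2 - ∑ j ∈ Y, p j ^ 2 ≤ (∑ i ∈ X, p i - ∑ j ∈ Y, p j) ^ 2 := by
  induction X using Finset.strongInduction generalizing Y with
  | H X ih =>
    set d := ∑ i ∈ X, p i - ∑ j ∈ Y, p j with hd
    rcases le_or_gt d 0 with hd0 | hd0
    · nlinarith [sum_sq_sub_sum_sq_le_mul_sub_sum p hX hY hc]
    by_cases hbig : ∃ x ∈ X, d < p x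
    · obtain ⟨x, hx, hdx⟩ := hbig
      obtain ⟨y, hy⟩ : Y.Nonempty := by
        rw [nonempty_iff_ne_empty]
        rintro rfl
        have := single_le_sum (fun i hi => (hX i hi).1) hx
        simp only [sum_empty, sub_zero] at hd
        linarith
      have hIH := ih (X.erase x) (erase_ssubset hx) (Y.erase y)
        (fun i hi => hX i (mem_of_mem_erase hi)) (fun j hj => hY j (mem_of_mem_erase hj))
      have hxy : p x ≤ p y := (hX x hx).2.trans (hY y hy)
      have hd' : d = (p x - p y) + (∑ i ∈ X.erase x, p i - ∑ j ∈ Y.erase y, p j) := by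
        rw [hd, ← add_sum_erase X p hx, ← add_sum_erase Y p hy]
        ring
      rw [← add_sum_erase X _ hx, ← add_sum_erase Y _ hy]
      -- cancelling `x` against `y` turns `d` into `d + t` with `t = y - x ≥ 0`,
      -- and `d² - (d + t)² + y² - x² = 2t(x - d) ≥ 0`
      nlinarith [mul_nonneg (sub_nonneg.2 hxy) (sub_nonneg.2 hdx.le)]
    · push Not at hbig
      have hX' : ∀ i ∈ X, 0 ≤ p i ∧ p i ≤ min c d :=
        fun i hi => ⟨(hX i hi).1, le_min (hX i hi).2 (hbig i hi)⟩
      have hY' : ∀ j ∈ Y, min c d ≤ p j := fun j hj => (min_le_left c d).trans (hY j hj)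
      have he : 0 ≤ min c d := le_min hc hd0.le
      calc _ ≤ min c d * d := sum_sq_sub_sum_sq_le_mul_sub_sum p hX' hY' he
        _ ≤ d ^ 2 := by nlinarith [min_le_right c d]

end Exchange

section Loss

variable {n : ℕ} (p : Fin n → ℝ) (D : ℝ)

theorem expLoss_insert {S : Finset (Fin n)} {a : Fin n} (ha : a ∉ S) :
    expLoss p D (insert a S) = expLoss p D S + p a * (2 * (∑ i ∈ S, p i - D) + 1) := by
  rw [expLoss, expLoss, sum_insert ha, sum_insert ha]
  ring

theorem expLoss_eq (S : Finset (Fin n)) :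
    expLoss p D S = (∑ i ∈ S, p i - D) ^ 2 + ∑ i ∈ S, p i - ∑ i ∈ S, p i ^ 2 := by
  rw [expLoss, add_sub_assoc, ← sum_sub_distrib]
  congr 2 with i
  ring

theorem expLoss_le_of_sum_eq_sub_half {A : Finset (Fin n)} {c : ℝ} (hc : 0 ≤ c)
    (hp : ∀ i, 0 ≤ p i) (hout : ∀ i ∉ A, p i ≤ c) (hin : ∀ i ∈ A, c ≤ p i)
    (hA : ∑ i ∈ A, p i = D - 1 / 2) (S : Finset (Fin n)) :
    expLoss p D A ≤ expLoss p D S := by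
  have hkey := sum_sq_sub_sum_sq_le_sq_sub_sum p (S \ A) (A \ S) hc
    (fun i hi => ⟨hp i, hout i (mem_sdiff.1 hi).2⟩) (fun j hj => hin j (mem_sdiff.1 hj).1)
  rw [sum_sdiff_sub_sum_sdiff, sum_sdiff_sub_sum_sdiff, hA] at hkey
  rw [expLoss_eq, expLoss_eq, hA]
  nlinarith

end Loss

section Prefix

variable {n : ℕ} (σ : Equiv.Perm (Fin n))

theorem mem_prefixSet {m : ℕ} {i : Fin n} : i ∈ prefixSet σ m ↔ (σ.symm i : ℕ) < m := by
  simp only [prefixSet, mem_image, mem_filter, mem_univ, true_and]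
  exact ⟨by rintro ⟨j, hj, rfl⟩; simpa using hj, fun h => ⟨σ.symm i, h, σ.apply_symm_apply i⟩⟩

theorem apply_notMem_prefixSet {m : ℕ} (hm : m < n) : σ ⟨m, hm⟩ ∉ prefixSet σ m := by
  simp [mem_prefixSet]

theorem prefixSet_succ {m : ℕ} (hm : m < n) :
    prefixSet σ (m + 1) = insert (σ ⟨m, hm⟩) (prefixSet σ m) := by
  ext i
  simp only [mem_insert, mem_prefixSet, ← Equiv.symm_apply_eq, Fin.ext_iff]
  omega

variable {p : Fin n → ℝ} (hσ : ∀ i j : Fin n, i ≤ j → p (σ j) ≤ p (σ i))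
include hσ

theorem le_of_mem_prefixSet {m : ℕ} (hm : m < n) {i : Fin n} (hi : i ∈ prefixSet σ m) :
    p (σ ⟨m, hm⟩) ≤ p i := by
  simpa using hσ (σ.symm i) ⟨m, hm⟩ (Fin.le_def.2 ((mem_prefixSet σ).1 hi).le)

theorem le_of_notMem_prefixSet {m : ℕ} (hm : m < n) {i : Fin n} (hi : i ∉ prefixSet σ m) :
    p i ≤ p (σ ⟨m, hm⟩) := by
  simpa using hσ ⟨m, hm⟩ (σ.symm i) (Fin.le_def.2 (not_lt.1 (mt (mem_prefixSet σ).2 hi)))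

end Prefix

theorem stmt_5_general {n : ℕ} (p : Fin n → ℝ)
    (hp : ∀ i, 0 ≤ p i ∧ p i ≤ 1) (D : ℝ)
    (σ : Equiv.Perm (Fin n)) (hσ : ∀ i j : Fin n, i ≤ j → p (σ j) ≤ p (σ i))
    (k : ℕ) (hk1 : 1 ≤ k) (hk2 : k ≤ n)
    (heq : ∑ i ∈ prefixSet σ (k - 1), p i = D - 1/2) :
    expLoss p D (prefixSet σ (k - 1)) = expLoss p D (prefixSet σ k) ∧
    (∀ S : Finset (Fin n), expLoss p D (prefixSet σ (k - 1)) ≤ expLoss p D S) ∧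
    (∀ S : Finset (Fin n), expLoss p D (prefixSet σ k) ≤ expLoss p D S) := by
  obtain ⟨m, rfl⟩ := Nat.exists_eq_add_of_le' hk1
  have hm : m < n := hk2
  rw [Nat.add_sub_cancel] at heq ⊢
  have hsame : expLoss p D (prefixSet σ m) = expLoss p D (prefixSet σ (m + 1)) := by
    rw [prefixSet_succ σ hm, expLoss_insert p D (apply_notMem_prefixSet σ hm), heq]
    ring
  have hopt := expLoss_le_of_sum_eq_sub_half p D (hp _).1 (fun i => (hp i).1)
    (fun i => le_of_notMem_prefixSet σ hσ hm) (fun i => le_of_mem_prefixSet σ hσ hm) heq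
  exact ⟨hsame, hopt, hsame ▸ hopt⟩

theorem stmt_5 {n : ℕ} (hn : 1 ≤ n) (p : Fin n → ℝ)
    (hp : ∀ i, 0 ≤ p i ∧ p i ≤ 1) (D : ℝ)
    (σ : Equiv.Perm (Fin n)) (hσ : ∀ i j : Fin n, i ≤ j → p (σ j) ≤ p (σ i))
    (k : ℕ) (hk1 : 1 ≤ k) (hk2 : k ≤ n)
    (heq : ∑ i ∈ prefixSet σ (k - 1), p i = D - 1/2) :
    expLoss p D (prefixSet σ (k - 1)) = expLoss p D (prefixSet σ k) ∧
    (∀ S : Finset (Fin n), expLoss p D (prefixSet σ (k - 1)) ≤ expLoss p D S) ∧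
    (∀ S : Finset (Fin n), expLoss p D (prefixSet σ k) ≤ expLoss p D S) :=
  stmt_5_general p hp D σ hσ k hk1 hk2 heq
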